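/- Let μ be a finite measure on ℝ^d that is absolutely continuous with respect to Lebesgue measure and let x_1, …, x_N ∈ ℝ^d (N ≥ 1) be pairwise distinct. Then for each index i, the map ψ ↦ μ(Lag_i^ψ) assigning to a weight vector the μ-mass of the i-th Laguerre cell is continuous on ℝ^N. -/

import Mathlib

/-!
A point `p` lying on none of the power bisectors `‖p - x i‖² - ψ i = ‖p - x j‖² - ψ j` satisfies
all inequalities defining `Lag x ψ i` strictly or violates one strictly, so its membership in the
cell does not change under small perturbations of `ψ`. These bisectors are hyperplanes because the
sites are distinct, hence Lebesgue-null and so `μ`-null; as `μ` is finite, dominated convergence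
for the indicators of the cells gives continuity of their masses.
-/

open MeasureTheory

/-- The Laguerre cell of index `i` for sites `x` and weights `ψ`. -/
def Lag {d N : ℕ} (x : Fin N → EuclideanSpace ℝ (Fin d)) (ψ : Fin N → ℝ) (i : Fin N) :
    Set (EuclideanSpace ℝ (Fin d)) :=
  {p | ∀ j, j ≠ i → ‖p - x i‖ ^ 2 - ψ i ≤ ‖p - x j‖ ^ 2 - ψ j}

open Filter Topology
open scoped RealInnerProductSpace

theorem eventually_le_iff_of_ne {X α : Type*} [TopologicalSpace X] [LinearOrder α]
    [TopologicalSpace α] [OrderClosedTopology α] {f g : X → α} {a : X}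
    (hf : ContinuousAt f a) (hg : ContinuousAt g a) (hfg : f a ≠ g a) :
    ∀ᶠ b in 𝓝 a, f b ≤ g b ↔ f a ≤ g a := by
  rcases hfg.lt_or_gt with h | h
  · exact (hf.eventually_lt hg h).mono fun b hb => iff_of_true hb.le h.le
  · exact (hg.eventually_lt hf h).mono fun b hb => iff_of_false hb.not_ge h.not_ge

section AddHaar

variable {E : Type*} [NormedAddCommGroup E] [InnerProductSpace ℝ E] [FiniteDimensional ℝ E]
  [MeasurableSpace E] [BorelSpace E] (μ : Measure E) [μ.IsAddHaarMeasure]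

theorem addHaar_setOf_inner_eq {v : E} (hv : v ≠ 0) (c : ℝ) : μ {p | ⟪v, p⟫ = c} = 0 := by
  -- the level set is the preimage of the point `c` under the affine map `⟪v, ·⟫`
  let H := (affineSpan ℝ {c}).comap (innerₛₗ ℝ v).toAffineMap
  have hH : (H : Set E) = {p | ⟪v, p⟫ = c} := by
    ext p
    simp [H]
  rw [← hH]
  refine Measure.addHaar_affineSubspace μ H fun htop => hv ?_
  have hmem : ∀ p, ⟪v, p⟫ = c :=
    (Set.eq_univ_iff_forall (s := {p | ⟪v, p⟫ = c})).1 (by rw [← hH, htop, AffineSubspace.top_coe])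
  rw [← inner_self_eq_zero (𝕜 := ℝ), hmem v, ← hmem 0, inner_zero_right]

theorem addHaar_setOf_sq_norm_sub_eq {a b : E} (hab : a ≠ b) (s t : ℝ) :
    μ {p | ‖p - a‖ ^ 2 - s = ‖p - b‖ ^ 2 - t} = 0 := by
  convert addHaar_setOf_inner_eq μ (sub_ne_zero.2 hab.symm) ((s - t + ‖b‖ ^ 2 - ‖a‖ ^ 2) / 2)
    using 2
  ext p
  rw [Set.mem_ofPred_eq, Set.mem_ofPred_eq, norm_sub_sq_real, norm_sub_sq_real, inner_sub_left,
    real_inner_comm p a, real_inner_comm p b]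
  constructor <;> intro h <;> linarith

end AddHaar

section Laguerre

variable {d N : ℕ} {x : Fin N → EuclideanSpace ℝ (Fin d)}

theorem isClosed_Lag (x : Fin N → EuclideanSpace ℝ (Fin d)) (ψ : Fin N → ℝ) (i : Fin N) :
    IsClosed (Lag x ψ i) := by
  simp only [Lag, Set.ofPred_forall]
  exact isClosed_iInter fun j => isClosed_iInter fun _ => isClosed_le (by fun_prop) (by fun_prop)

theorem eventually_mem_Lag_iff {ψ : Fin N → ℝ} {i : Fin N} {p : EuclideanSpace ℝ (Fin d)}
    (hp : ∀ j, j ≠ i → ‖p - x i‖ ^ 2 - ψ i ≠ ‖p - x j‖ ^ 2 - ψ j) :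
    ∀ᶠ ψ' in 𝓝 ψ, p ∈ Lag x ψ' i ↔ p ∈ Lag x ψ i := by
  have hcond : ∀ j, ∀ᶠ ψ' in 𝓝 ψ, j ≠ i →
      (‖p - x i‖ ^ 2 - ψ' i ≤ ‖p - x j‖ ^ 2 - ψ' j ↔ ‖p - x i‖ ^ 2 - ψ i ≤ ‖p - x j‖ ^ 2 - ψ j) :=
    fun j => eventually_imp_distrib_left.2 fun hj =>
      eventually_le_iff_of_ne (Continuous.continuousAt (by fun_prop))
        (Continuous.continuousAt (by fun_prop)) (hp j hj)
  filter_upwards [eventually_all.2 hcond] with ψ' h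
  exact forall_congr' fun j => forall_congr' (h j)

theorem ae_sq_norm_sub_ne {μ : Measure (EuclideanSpace ℝ (Fin d))} (hac : μ ≪ volume)
    (hx : Function.Injective x) (ψ : Fin N → ℝ) (i : Fin N) :
    ∀ᵐ p ∂μ, ∀ j, j ≠ i → ‖p - x i‖ ^ 2 - ψ i ≠ ‖p - x j‖ ^ 2 - ψ j :=
  hac.ae_le <| ae_all_iff.2 fun j => eventually_imp_distrib_left.2 fun hj =>
    measure_eq_zero_iff_ae_notMem.1 <|
      addHaar_setOf_sq_norm_sub_eq volume (hx.ne hj.symm) (ψ i) (ψ j)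

end Laguerre

theorem laguerre_mass_continuous_general {d N : ℕ}
    (μ : Measure (EuclideanSpace ℝ (Fin d))) [IsFiniteMeasure μ]
    (hac : μ ≪ volume)
    (x : Fin N → EuclideanSpace ℝ (Fin d)) (hx : Function.Injective x)
    (i : Fin N) :
    Continuous fun ψ : Fin N → ℝ => μ (Lag x ψ i) := by
  refine continuous_iff_continuousAt.2 fun ψ => ?_
  refine tendsto_measure_of_ae_tendsto_indicator_of_isFiniteMeasure _
    (isClosed_Lag x ψ i).measurableSet (fun ψ' => (isClosed_Lag x ψ' i).measurableSet) ?_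
  filter_upwards [ae_sq_norm_sub_ne hac hx ψ i] with p hp using eventually_mem_Lag_iff hp

/-- for a finite measure absolutely continuous with respect to
Lebesgue measure, the mass of the `i`-th Laguerre cell depends continuously on
the weight vector. -/
theorem laguerre_mass_continuous {d N : ℕ} (hN : 1 ≤ N)
    (μ : Measure (EuclideanSpace ℝ (Fin d))) [IsFiniteMeasure μ]
    (hac : μ ≪ volume)
    (x : Fin N → EuclideanSpace ℝ (Fin d)) (hx : Function.Injective x)
    (i : Fin N) :
    Continuous fun ψ : Fin N → ℝ => μ (Lag x ψ i) :=
  laguerre_mass_continuous_general μ hac x hx i
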